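/- Let D be a 4×4 complex matrix (entries D_{ij}, 0-based indexing, row i and column j). The linear map x ↦ D·x on ℂ⁴ is a derivation of the 4-dimensional Mock-Lie algebra A_{1,4} if and only if D_{01} = D_{02} = D_{03} = 0, D_{13} = 0, D_{21} = 0, D_{23} = 0, D_{00} = D_{33} − D_{22}, D_{11} = 2·(D_{33} − D_{22}), and D_{31} = 2·D_{20}. Equivalently, the derivations are exactly the linear maps whose matrix relative to the basis (e_1, e_2, e_3, e_4) has the form [[d_{44}−d_{33}, 0, 0, 0], [d_{21}, 2d_{44}−2d_{33}, d_{23}, 0], [d_{31}, 0, d_{33}, 0], [d_{41}, 2d_{31}, d_{43}, d_{44}]]. -/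

import Mathlib

/-!
The only nonzero products of basis vectors are `e₁e₁ = e₂` and `e₁e₃ = e₄` (in the 0-based code `eᵢ` is `Pi.single (i - 1) 1`).
The identity at `(e₁, e₁)` and `(e₁, e₃)` expresses the columns of `D` for `e₂` and `e₄` through
those for `e₁` and `e₃`, and at `(e₃, e₃)` it forces `D 0 2 = 0`; together these are the stated
relations. Conversely, under these relations the identity is a polynomial identity in the
coordinates.
-/

open Matrix

/-- The product of the 4-dimensional Mock-Lie algebra `A_{1,4}`:
`e_1 · e_1 = e_2`, `e_1 · e_3 = e_3 · e_1 = e_4`, all other products of basis vectors zero. -/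
def mulA14 (x y : Fin 4 → ℂ) : Fin 4 → ℂ := ![0, x 0 * y 0, 0, x 0 * y 2 + x 2 * y 0]

def IsDerivation {M : Type*} [Add M] (mul : M → M → M) (f : M → M) : Prop :=
  ∀ x y, f (mul x y) = mul (f x) y + mul x (f y)

theorem mulA14_comm (x y : Fin 4 → ℂ) : mulA14 x y = mulA14 y x := by
  simp only [mulA14, mul_comm, add_comm]

theorem mulA14_single_zero_left (x : Fin 4 → ℂ) :
    mulA14 (Pi.single 0 1) x = ![0, x 0, 0, x 2] := by
  simp [mulA14]

theorem mulA14_single_two_left (x : Fin 4 → ℂ) :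
    mulA14 (Pi.single 2 1) x = ![0, 0, 0, x 0] := by
  simp [mulA14]

theorem mulA14_single_zero_single_zero :
    mulA14 (Pi.single 0 1) (Pi.single 0 1) = Pi.single 1 1 := by
  ext i; fin_cases i <;> simp [mulA14]

theorem mulA14_single_zero_single_two :
    mulA14 (Pi.single 0 1) (Pi.single 2 1) = Pi.single 3 1 := by
  ext i; fin_cases i <;> simp [mulA14]

theorem mulA14_single_two_single_two :
    mulA14 (Pi.single 2 1) (Pi.single 2 1) = 0 := by
  ext i; fin_cases i <;> simp [mulA14]

section Derivation

variable {D : Matrix (Fin 4) (Fin 4) ℂ}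

theorem col_one_of_isDerivation_mulA14 (hD : IsDerivation mulA14 D.mulVec) :
    D 0 1 = 0 ∧ D 1 1 = 2 * D 0 0 ∧ D 2 1 = 0 ∧ D 3 1 = 2 * D 2 0 := by
  have h := hD (Pi.single 0 1) (Pi.single 0 1)
  rw [mulA14_single_zero_single_zero, mulA14_comm (D *ᵥ _), mulVec_single_one,
    mulVec_single_one, mulA14_single_zero_left] at h
  simpa [funext_iff, Fin.forall_fin_succ, ← two_mul] using h

theorem col_three_of_isDerivation_mulA14 (hD : IsDerivation mulA14 D.mulVec) :
    D 0 3 = 0 ∧ D 1 3 = D 0 2 ∧ D 2 3 = 0 ∧ D 3 3 = D 0 0 + D 2 2 := by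
  have h := hD (Pi.single 0 1) (Pi.single 2 1)
  rw [mulA14_single_zero_single_two, mulA14_comm (D *ᵥ _), mulVec_single_one,
    mulVec_single_one, mulVec_single_one, mulA14_single_zero_left, mulA14_single_two_left] at h
  simpa [funext_iff, Fin.forall_fin_succ] using h

theorem entry_zero_two_of_isDerivation_mulA14 (hD : IsDerivation mulA14 D.mulVec) : D 0 2 = 0 := by
  have h := hD (Pi.single 2 1) (Pi.single 2 1)
  rw [mulA14_single_two_single_two, mulA14_comm (D *ᵥ _), mulVec_single_one, mulVec_zero,
    mulA14_single_two_left] at h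
  simpa [funext_iff, Fin.forall_fin_succ, ← two_mul] using h.symm

theorem isDerivation_mulA14 (h01 : D 0 1 = 0) (h02 : D 0 2 = 0) (h03 : D 0 3 = 0)
    (h13 : D 1 3 = 0) (h21 : D 2 1 = 0) (h23 : D 2 3 = 0) (h00 : D 0 0 = D 3 3 - D 2 2)
    (h11 : D 1 1 = 2 * (D 3 3 - D 2 2)) (h31 : D 3 1 = 2 * D 2 0) :
    IsDerivation mulA14 D.mulVec := by
  intro x y
  ext i
  fin_cases i <;>
    simp only [mulA14, mulVec, dotProduct, Fin.sum_univ_four, Fin.zero_eta, Fin.mk_one,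
      Fin.reduceFinMk, Fin.isValue, cons_val_zero, cons_val_one, cons_val, Pi.add_apply, h00, h01,
      h02, h03, h11, h13, h21, h23, h31, mul_zero, zero_mul, add_zero, zero_add] <;>
    ring

end Derivation

/-- `x ↦ D · x` is a derivation of `A_{1,4}` iff
`D 0 1 = D 0 2 = D 0 3 = 0`, `D 1 3 = 0`, `D 2 1 = 0`, `D 2 3 = 0`,
`D 0 0 = D 3 3 - D 2 2`, `D 1 1 = 2 * (D 3 3 - D 2 2)` and `D 3 1 = 2 * D 2 0`. -/
theorem derivation_A14_iff (D : Matrix (Fin 4) (Fin 4) ℂ) :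
    (∀ x y : Fin 4 → ℂ,
        D.mulVec (mulA14 x y) = mulA14 (D.mulVec x) y + mulA14 x (D.mulVec y)) ↔
      (D 0 1 = 0 ∧ D 0 2 = 0 ∧ D 0 3 = 0 ∧ D 1 3 = 0 ∧ D 2 1 = 0 ∧ D 2 3 = 0 ∧
        D 0 0 = D 3 3 - D 2 2 ∧ D 1 1 = 2 * (D 3 3 - D 2 2) ∧ D 3 1 = 2 * D 2 0) := by
  refine ⟨fun hD => ?_, fun ⟨h01, h02, h03, h13, h21, h23, h00, h11, h31⟩ =>
    isDerivation_mulA14 h01 h02 h03 h13 h21 h23 h00 h11 h31⟩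
  obtain ⟨h01, h11, h21, h31⟩ := col_one_of_isDerivation_mulA14 hD
  obtain ⟨h03, h13, h23, h33⟩ := col_three_of_isDerivation_mulA14 hD
  have h02 := entry_zero_two_of_isDerivation_mulA14 hD
  refine ⟨h01, h02, h03, h13.trans h02, h21, h23, ?_, ?_, h31⟩
  · linear_combination -h33
  · linear_combination h11 - 2 * h33
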